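/- arXiv:1501.00061 — 4 statements merged into one kernel-verified Lean document; each statement's English description precedes it below -/
import Mathlib

section
/- For n ≥ 3, the number of independent sets (including the empty set) in the cycle graph on n vertices equals the n-th Lucas number, where L_0 = 2 and L_1 = 1. -/
open Classical in
/-- Number of independent sets (including the empty set) of a finite graph. -/
noncomputable def numIndepSets {V : Type*} [Fintype V] (G : SimpleGraph V) : ℕ :=
  (Finset.univ.powerset.filter fun s : Finset V =>
    ∀ v ∈ s, ∀ w ∈ s, ¬ G.Adj v w).card

open Classical in
/-- Number of independent sets of size exactly `t`. -/
noncomputable def numIndepSetsOfSize {V : Type*} [Fintype V] (G : SimpleGraph V) (t : ℕ) : ℕ :=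
  (Finset.univ.powerset.filter fun s : Finset V =>
    (∀ v ∈ s, ∀ w ∈ s, ¬ G.Adj v w) ∧ s.card = t).card

/-- The Lucas numbers: `L 0 = 2`, `L 1 = 1`, `L (n+2) = L (n+1) + L n`. -/
def lucasNum : ℕ → ℕ
  | 0 => 2
  | 1 => 1
  | n + 2 => lucasNum (n + 1) + lucasNum n

/-!
Independent sets of `C_n` are Boolean words of length `n` with no two cyclically consecutive
`true`s. For any fixed suffix `s`, the words `w` of length `n` for which `w ++ s` has no two
consecutive `true`s obey the Fibonacci recurrence: `w` starts with `false`, or with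
`true, false`. Splitting the cyclic words on their first letter writes their number as the sum of
two such counts, with suffixes `[false]` and `[true]`, so it obeys the same recurrence as the
Lucas numbers, and it agrees with them at `n = 2, 3`.
-/

open List

theorem eq_of_fib_recurrence {u v : ℕ → ℕ} (hu : ∀ n, u (n + 2) = u (n + 1) + u n)
    (hv : ∀ n, v (n + 2) = v (n + 1) + v n) (h0 : u 0 = v 0) (h1 : u 1 = v 1) :
    ∀ n, u n = v n
  | 0 => h0
  | 1 => h1
  | n + 2 => by
    rw [hu, hv, eq_of_fib_recurrence hu hv h0 h1 n, eq_of_fib_recurrence hu hv h0 h1 (n + 1)]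

theorem numIndepSets_eq_natCard {V : Type*} [Fintype V] (G : SimpleGraph V) :
    numIndepSets G = Nat.card {f : V → Bool // ∀ v w, G.Adj v w → (f v && f w) = false} := by
  classical
  rw [numIndepSets, Finset.powerset_univ, ← Fintype.card_subtype, ← Nat.card_eq_fintype_card]
  refine Nat.card_congr
    { toFun s := ⟨fun v => decide (v ∈ s.1), fun v w h => by
        simpa using fun hv hw => s.2 v hv w hw h⟩
      invFun f := ⟨({v | f.1 v} : Finset V), fun v hv w hw h => by
        simpa [by simpa using hv, by simpa using hw] using f.2 v w h⟩
      left_inv s := by ext; simp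
      right_inv f := by ext; simp }

theorem cycleGraph_adj_iff {n : ℕ} {v w : Fin (n + 2)} :
    (SimpleGraph.cycleGraph (n + 2)).Adj v w ↔ v = w + 1 ∨ w = v + 1 := by
  rw [SimpleGraph.cycleGraph_adj, sub_eq_iff_eq_add, sub_eq_iff_eq_add, add_comm 1, add_comm 1]

section Words

variable {α : Type*}

noncomputable def wordCount (p : List α → Prop) (n : ℕ) : ℕ :=
  Nat.card {f : Fin n → α // p (ofFn f)}

theorem wordCount_zero (p : List α → Prop) [Decidable (p [])] :
    wordCount p 0 = if p [] then 1 else 0 := by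
  split_ifs with h <;> simp [wordCount, h]

@[simp]
theorem wordCount_false (n : ℕ) : wordCount (fun _ : List α => False) n = 0 := by
  simp [wordCount]

theorem wordCount_succ [Fintype α] (p : List α → Prop) (n : ℕ) :
    wordCount p (n + 1) = ∑ a, wordCount (fun l => p (a :: l)) n := by
  simp only [wordCount]
  rw [← Nat.card_sigma]
  refine Nat.card_congr ((Equiv.subtypeEquiv (Fin.consEquiv fun _ => α) fun x => ?_).symm.trans
    (Equiv.subtypeProdEquivSigmaSubtype fun a g => p (a :: ofFn g)))
  simp [Fin.consEquiv]

end Words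

def IsSparse (l : List Bool) : Prop :=
  l.IsChain fun a b => (a && b) = false

instance : DecidablePred IsSparse := fun l => inferInstanceAs (Decidable (l.IsChain _))

@[simp]
theorem isSparse_false_cons (l : List Bool) : IsSparse (false :: l) ↔ IsSparse l := by
  simp [IsSparse, isChain_cons]

@[simp]
theorem isSparse_true_false_cons (l : List Bool) :
    IsSparse (true :: false :: l) ↔ IsSparse l := by
  rw [IsSparse, isChain_cons_cons, ← IsSparse, isSparse_false_cons]
  simp

@[simp]
theorem not_isSparse_true_true_cons (l : List Bool) : ¬IsSparse (true :: true :: l) := by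
  simp [IsSparse]

theorem isSparse_ofFn_iff {n : ℕ} (f : Fin (n + 1) → Bool) :
    IsSparse (ofFn f) ↔ ∀ i : Fin n, (f i.castSucc && f i.succ) = false := by
  rw [IsSparse, isChain_ofFn]
  simp [Fin.forall_iff]

theorem wordCount_isSparse_append_add_two (s : List Bool) (n : ℕ) :
    wordCount (fun l => IsSparse (l ++ s)) (n + 2) =
      wordCount (fun l => IsSparse (l ++ s)) (n + 1) +
        wordCount (fun l => IsSparse (l ++ s)) n := by
  rw [wordCount_succ, Fintype.sum_bool, wordCount_succ (n := n), Fintype.sum_bool]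
  simp [add_comm]

def IsCyclicSparse (l : List Bool) : Prop :=
  IsSparse (l ++ l.take 1)

instance : DecidablePred IsCyclicSparse :=
  fun l => inferInstanceAs (Decidable (IsSparse (l ++ l.take 1)))

theorem isCyclicSparse_ofFn_iff {n : ℕ} (f : Fin (n + 1) → Bool) :
    IsCyclicSparse (ofFn f) ↔ ∀ i, (f i && f (i + 1)) = false := by
  have hlast : (ofFn f).getLast? = some (f (Fin.last n)) := by
    rw [ofFn_succ', concat_eq_append, getLast?_append]
    simp
  rw [IsCyclicSparse, IsSparse, isChain_append, ← IsSparse, isSparse_ofFn_iff, hlast,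
    Fin.forall_fin_succ', Fin.last_add_one]
  simp [Fin.coeSucc_eq_succ]

theorem wordCount_isCyclicSparse_add_two (n : ℕ) :
    wordCount IsCyclicSparse (n + 2) =
      wordCount (fun l => IsSparse (l ++ [false])) (n + 1) +
        wordCount (fun l => IsSparse (l ++ [true])) n := by
  rw [wordCount_succ, Fintype.sum_bool, wordCount_succ (n := n), Fintype.sum_bool]
  simp [IsCyclicSparse, add_comm]

theorem wordCount_isCyclicSparse_eq_lucasNum (n : ℕ) :
    wordCount IsCyclicSparse (n + 2) = lucasNum (n + 2) := by
  refine eq_of_fib_recurrence (u := fun n => wordCount IsCyclicSparse (n + 2))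
    (v := fun n => lucasNum (n + 2)) (fun n => ?_) (fun _ => rfl) ?_ ?_ n
  · simp only [wordCount_isCyclicSparse_add_two, wordCount_isSparse_append_add_two _ n,
      wordCount_isSparse_append_add_two _ (n + 1)]
    ring
  all_goals simp only [wordCount_succ, Fintype.sum_bool, wordCount_zero]; decide

theorem numIndepSets_cycleGraph_eq_wordCount (n : ℕ) :
    numIndepSets (SimpleGraph.cycleGraph (n + 2)) = wordCount IsCyclicSparse (n + 2) := by
  rw [numIndepSets_eq_natCard, wordCount]
  refine Nat.card_congr (Equiv.subtypeEquivRight fun f => ?_)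
  rw [isCyclicSparse_ofFn_iff]
  simp only [cycleGraph_adj_iff]
  refine ⟨fun h v => h v (v + 1) (.inr rfl), ?_⟩
  rintro h v w (rfl | rfl)
  · rw [Bool.and_comm]
    exact h w
  · exact h v

theorem numIndepSets_cycleGraph (n : ℕ) (hn : 3 ≤ n) :
    numIndepSets (SimpleGraph.cycleGraph n) = lucasNum n := by
  obtain ⟨m, rfl⟩ : ∃ m, n = m + 2 := ⟨n - 2, by omega⟩
  rw [numIndepSets_cycleGraph_eq_wordCount, wordCount_isCyclicSparse_eq_lucasNum]
end

section
/- For any n ≥ 3 and 1 ≤ t ≤ ⌊n/2⌋, the number of independent sets of size t in the cycle graph on n vertices equals (n/(n-t)) · C(n - t, t). -/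
/-! Through `Fin.val`, an independent set of `C_n` is a subset of `range n` with no two
consecutive elements that does not contain both `0` and `n - 1`. Splitting on whether `n - 1`
is chosen, `i_t(C_n) = P(n - 1, t) + P(n - 3, t - 1)`, where `P(m, t)` counts the `t`-subsets
of an interval of length `m` with no two consecutive elements. Splitting on the top element gives
`P(m + 2, t + 1) = P(m + 1, t + 1) + P(m, t)`, the recursion of `C(m + 1 - t, t)`. Finally
`(n - t) (C(n - t, t) + C(n - t - 1, t - 1)) = n C(n - t, t)` since
`(n - t) C(n - t - 1, t - 1) = t C(n - t, t)`. -/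

open Finset

section PowersetCard

variable {α : Type*} [DecidableEq α]

theorem card_filter_powersetCard_succ_insert {s : Finset α} {a : α} (ha : a ∉ s) (k : ℕ)
    (p : Finset α → Prop) [DecidablePred p] :
    #{u ∈ powersetCard (k + 1) (insert a s) | p u} =
      #{u ∈ powersetCard (k + 1) s | p u} + #{u ∈ powersetCard k s | p (insert a u)} := by
  have hnot : ∀ u ∈ powersetCard k s, a ∉ u := fun u hu hau =>
    ha ((mem_powersetCard.1 hu).1 hau)
  rw [powersetCard_succ_insert ha, filter_union, filter_image, card_union_of_disjoint,
    card_image_of_injOn]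
  · intro u hu v hv huv
    rw [← erase_insert (hnot u (mem_filter.1 hu).1), ← erase_insert (hnot v (mem_filter.1 hv).1)]
    exact congrArg (·.erase a) huv
  · refine disjoint_left.2 fun u hu hu' => ?_
    obtain ⟨v, -, rfl⟩ := mem_image.1 hu'
    exact ha ((mem_powersetCard.1 (mem_filter.1 hu).1).1 (mem_insert_self a v))

theorem filter_powersetCard_insert_and_notMem {s : Finset α} {a : α} (ha : a ∉ s) (k : ℕ)
    (p : Finset α → Prop) [DecidablePred p] :
    {u ∈ powersetCard k (insert a s) | p u ∧ a ∉ u} = {u ∈ powersetCard k s | p u} := by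
  ext u
  simp only [mem_filter, mem_powersetCard]
  constructor
  · rintro ⟨⟨hsub, hcard⟩, hp, hau⟩
    exact ⟨⟨(subset_insert_iff_of_notMem hau).1 hsub, hcard⟩, hp⟩
  · rintro ⟨⟨hsub, hcard⟩, hp⟩
    exact ⟨⟨hsub.trans (subset_insert a s), hcard⟩, hp, fun hau => ha (hsub hau)⟩

end PowersetCard

def NoTwoConsecutive (s : Finset ℕ) : Prop :=
  ∀ i ∈ s, i + 1 ∉ s

instance : DecidablePred NoTwoConsecutive := fun s =>
  inferInstanceAs (Decidable (∀ i ∈ s, i + 1 ∉ s))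

theorem noTwoConsecutive_insert_add_one {s : Finset ℕ} {x : ℕ} (hs : ∀ y ∈ s, y ≤ x) :
    NoTwoConsecutive (insert (x + 1) s) ↔ NoTwoConsecutive s ∧ x ∉ s := by
  simp only [NoTwoConsecutive, mem_insert]
  constructor
  · intro h
    exact ⟨fun i hi hi1 => h i (.inr hi) (.inr hi1), fun hxs => h x (.inr hxs) (.inl rfl)⟩
  · rintro ⟨h, hxs⟩ i (rfl | hi) (hi1 | hi1)
    · omega
    · exact absurd (hs _ hi1) (by omega)
    · exact hxs (by rwa [Nat.add_right_cancel hi1] at hi)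
    · exact h i hi hi1

theorem card_noTwoConsecutive_Ico_add_two {a b : ℕ} (hab : a ≤ b) (t : ℕ) :
    #{u ∈ powersetCard (t + 1) (Ico a (b + 2)) | NoTwoConsecutive u} =
      #{u ∈ powersetCard (t + 1) (Ico a (b + 1)) | NoTwoConsecutive u} +
        #{u ∈ powersetCard t (Ico a b) | NoTwoConsecutive u} := by
  rw [show b + 2 = b + 1 + 1 from rfl, ← insert_Ico_right_eq_Ico_add_one (by omega : a ≤ b + 1),
    card_filter_powersetCard_succ_insert right_notMem_Ico,
    ← insert_Ico_right_eq_Ico_add_one hab, ← filter_powersetCard_insert_and_notMem right_notMem_Ico]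
  congr 2
  refine filter_congr fun u hu => noTwoConsecutive_insert_add_one fun y hy => ?_
  have := (mem_powersetCard.1 hu).1 hy
  simp only [mem_insert, mem_Ico] at this
  omega

theorem card_noTwoConsecutive_Ico : ∀ a m t : ℕ,
    #{u ∈ powersetCard t (Ico a (a + m)) | NoTwoConsecutive u} = (m + 1 - t).choose t
  | a, m, 0 => by
    rw [powersetCard_zero, filter_singleton, if_pos (by simp [NoTwoConsecutive])]
    simp
  | a, 0, t + 1 => by simp
  | a, 1, t + 1 => by
    rcases t with _ | t
    · rw [Nat.add_zero, Ico_add_one_right_eq_Icc, Icc_self, powersetCard_one, map_singleton,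
        filter_singleton, if_pos (by simp [NoTwoConsecutive])]
      simp
    · simp
  | a, m + 2, t + 1 => by
    have h1 := card_noTwoConsecutive_Ico a (m + 1) (t + 1)
    rw [← add_assoc] at h1
    rw [← add_assoc, card_noTwoConsecutive_Ico_add_two (Nat.le_add_right a m), h1,
      card_noTwoConsecutive_Ico a m t]
    rcases le_or_gt t (m + 1) with h | h
    · rw [show m + 2 + 1 - (t + 1) = m + 1 - t + 1 by omega,
        show m + 1 + 1 - (t + 1) = m + 1 - t by omega, Nat.choose_succ_succ', add_comm]
    · rw [show m + 2 + 1 - (t + 1) = 0 by omega, show m + 1 + 1 - (t + 1) = 0 by omega,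
        show m + 1 - t = 0 by omega, Nat.choose_eq_zero_of_lt (by omega : 0 < t)]
      simp

namespace SimpleGraph

theorem cycleGraph_adj_iff_eq_add_one {n : ℕ} {u v : Fin (n + 2)} :
    (cycleGraph (n + 2)).Adj u v ↔ u = v + 1 ∨ v = u + 1 := by
  rw [cycleGraph_adj, sub_eq_iff_eq_add, sub_eq_iff_eq_add, add_comm 1 v, add_comm 1 u]

theorem cycleGraph_forall_not_adj_iff {n : ℕ} (s : Finset (Fin (n + 2))) :
    (∀ v ∈ s, ∀ w ∈ s, ¬(cycleGraph (n + 2)).Adj v w) ↔ ∀ v ∈ s, v + 1 ∉ s := by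
  simp only [cycleGraph_adj_iff_eq_add_one]
  constructor
  · intro h v hv hv1
    exact h _ hv1 _ hv (.inl rfl)
  · rintro h v hv w hw (rfl | rfl)
    exacts [h w hw hv, h v hv hw]

end SimpleGraph

theorem Fin.eq_add_one_iff {n : ℕ} {v w : Fin (n + 1)} :
    w = v + 1 ↔ (v = Fin.last n ∧ w = 0) ∨ (w : ℕ) = v + 1 := by
  rw [Fin.ext_iff, Fin.val_add_one]
  split_ifs with h
  · subst h
    have := w.isLt
    simp only [true_and, Fin.ext_iff, Fin.val_last, Fin.val_zero]
    omega
  · simp [h]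

theorem Fin.forall_add_one_notMem_iff {n : ℕ} (s : Finset (Fin (n + 1))) :
    (∀ v ∈ s, v + 1 ∉ s) ↔ NoTwoConsecutive (s.map Fin.valEmbedding) ∧
      ¬(0 ∈ s.map Fin.valEmbedding ∧ n ∈ s.map Fin.valEmbedding) := by
  simp only [mem_map, Fin.valEmbedding_apply]
  constructor
  · intro h
    refine ⟨fun i hi hi1 => ?_, fun ⟨⟨w, hw, hw0⟩, ⟨v, hv, hvn⟩⟩ => ?_⟩
    · obtain ⟨v, hv, rfl⟩ := mem_map.1 hi
      obtain ⟨w, hw, hwv⟩ := mem_map.1 hi1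
      exact h v hv (Fin.eq_add_one_iff.2 (.inr hwv) ▸ hw)
    · exact h v hv (Fin.eq_add_one_iff.2 (.inl ⟨Fin.ext hvn, Fin.ext hw0⟩) ▸ hw)
  · rintro ⟨hc, hends⟩ v hv hv1
    rcases Fin.eq_add_one_iff.1 (rfl : v + 1 = v + 1) with ⟨rfl, h0⟩ | h
    · exact hends ⟨⟨_, hv1, by rw [h0, Fin.val_zero]⟩, ⟨_, hv, Fin.val_last n⟩⟩
    · exact hc _ (mem_map_of_mem _ hv) (mem_map.2 ⟨_, hv1, h⟩)

theorem numIndepSetsOfSize_cycleGraph_eq_card (n t : ℕ) :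
    numIndepSetsOfSize (SimpleGraph.cycleGraph (n + 2)) t =
      #{u ∈ powersetCard t (range (n + 2)) | NoTwoConsecutive u ∧ ¬(0 ∈ u ∧ n + 1 ∈ u)} := by
  rw [← Nat.Iio_eq_range, ← Fin.map_valEmbedding_univ, powersetCard_map, filter_map, card_map,
    numIndepSetsOfSize, powersetCard_eq_filter]
  congr 1
  ext s
  simp only [mem_filter, Function.comp_apply, SimpleGraph.cycleGraph_forall_not_adj_iff,
    Fin.forall_add_one_notMem_iff]
  tauto

theorem card_noTwoConsecutive_range_not_both_ends (k t : ℕ) :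
    #{u ∈ powersetCard (t + 1) (range (k + 3)) | NoTwoConsecutive u ∧ ¬(0 ∈ u ∧ k + 2 ∈ u)} =
      #{u ∈ powersetCard (t + 1) (range (k + 2)) | NoTwoConsecutive u} +
        #{u ∈ powersetCard t (Ico 1 (k + 1)) | NoTwoConsecutive u} := by
  rw [range_add_one, card_filter_powersetCard_succ_insert notMem_range_self]
  congr 1
  · refine congrArg card (filter_congr fun u hu => ?_)
    have : k + 2 ∉ u := fun h => notMem_range_self ((mem_powersetCard.1 hu).1 h)
    simp [this]
  · have hrange : range (k + 2) = insert (k + 1) (insert 0 (Ico 1 (k + 1))) := by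
      ext; simp only [mem_range, mem_insert, mem_Ico]; omega
    have h0 : 0 ∉ Ico 1 (k + 1) := by simp
    have h1 : k + 1 ∉ insert 0 (Ico 1 (k + 1)) := by simp
    rw [hrange, ← filter_powersetCard_insert_and_notMem h0,
      ← filter_powersetCard_insert_and_notMem h1]
    refine congrArg card (filter_congr fun u hu => ?_)
    rw [noTwoConsecutive_insert_add_one]
    · simp only [mem_insert_self, and_true, mem_insert, (Nat.succ_ne_zero (k + 1)).symm, false_or]
      tauto
    · intro y hy
      have := (mem_powersetCard.1 hu).1 hy
      simp only [mem_insert, mem_Ico] at this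
      omega

theorem numIndepSetsOfSize_zero {V : Type*} [Fintype V] (G : SimpleGraph V) :
    numIndepSetsOfSize G 0 = 1 := by
  rw [numIndepSetsOfSize, card_eq_one]
  refine ⟨∅, ext fun s => ?_⟩
  simp +contextual [card_eq_zero]

theorem numIndepSetsOfSize_cycleGraph_eq_choose_add_choose (n t : ℕ) (hn : 3 ≤ n) (ht : 1 ≤ t) :
    numIndepSetsOfSize (SimpleGraph.cycleGraph n) t =
      (n - t).choose t + (n - t - 1).choose (t - 1) := by
  obtain ⟨k, rfl⟩ := Nat.exists_eq_add_of_le' hn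
  obtain ⟨j, rfl⟩ := Nat.exists_eq_add_of_le' ht
  have hleft := card_noTwoConsecutive_Ico 0 (k + 2) (j + 1)
  have hright := card_noTwoConsecutive_Ico 1 k j
  rw [zero_add, Nat.Ico_zero_eq_range] at hleft
  rw [add_comm 1 k] at hright
  rw [numIndepSetsOfSize_cycleGraph_eq_card, card_noTwoConsecutive_range_not_both_ends, hleft,
    hright]
  congr 2; omega

theorem Nat.choose_succ_succ_add_choose_eq_div (m j : ℕ) :
    (m + 1).choose (j + 1) + m.choose j = (m + j + 2) * (m + 1).choose (j + 1) / (m + 1) := by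
  refine (Nat.div_eq_of_eq_mul_left m.succ_pos ?_).symm
  have := Nat.add_one_mul_choose_eq m j
  linarith

theorem numIndepSetsOfSize_cycleGraph_general (n t : ℕ) (hn : 3 ≤ n) :
    numIndepSetsOfSize (SimpleGraph.cycleGraph n) t
      = n * (n - t).choose t / (n - t) := by
  rcases Nat.eq_zero_or_pos t with rfl | ht
  · rw [numIndepSetsOfSize_zero, Nat.sub_zero, Nat.choose_zero_right, mul_one,
      Nat.div_self (by omega)]
  rw [numIndepSetsOfSize_cycleGraph_eq_choose_add_choose n t hn ht]
  rcases lt_or_ge t n with htn | htn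
  · obtain ⟨j, rfl⟩ := Nat.exists_eq_add_of_le' ht
    obtain ⟨m, hm⟩ : ∃ m, n - (j + 1) = m + 1 := ⟨n - (j + 1) - 1, by omega⟩
    rw [hm, Nat.add_sub_cancel, Nat.add_sub_cancel, Nat.choose_succ_succ_add_choose_eq_div,
      show m + j + 2 = n by omega]
  · -- both sides vanish, the right one as `x / 0 = 0`
    rw [Nat.sub_eq_zero_of_le htn, Nat.zero_sub, Nat.div_zero,
      Nat.choose_eq_zero_of_lt ht, Nat.choose_eq_zero_of_lt (by omega : 0 < t - 1)]

theorem numIndepSetsOfSize_cycleGraph (n t : ℕ) (hn : 3 ≤ n) (ht1 : 1 ≤ t)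
    (ht2 : t ≤ n / 2) :
    numIndepSetsOfSize (SimpleGraph.cycleGraph n) t
      = n * (n - t).choose t / (n - t) :=
  numIndepSetsOfSize_cycleGraph_general n t hn
end

section
/- For natural numbers n ≥ 3, a ≥ b ≥ 1, and any t ∈ ℕ, the number of independent sets in the chainsaw graph C(n, a, b) containing exactly t chain vertices equals i_t(C_n) · b^t · a^{n−2t}, where i_t(C_n) is the number of independent sets of size t in the n-cycle. -/
/-- The chainsaw graph `C(m, a, b)`: an `m`-cycle of chain vertices `(v, 0)`,
with an `a`-clique attached at each chain vertex (the vertices `(v, i)`),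
and each chain vertex `v` additionally joined to the `a - b` blade vertices
`(v+1, j)` with `1 ≤ j ≤ a - b` of the clique at `v + 1`. -/
def chainsawGraph (m a b : ℕ) : SimpleGraph (ZMod m × Fin a) :=
  SimpleGraph.fromRel (fun x y =>
    x.1 = y.1 ∨ (y.1 = x.1 + 1 ∧ x.2.val = 0 ∧ y.2.val ≤ a - b))

/-- The broken chainsaw graph `P(n, a, b)`: the chainsaw graph `C(n+1, a, b)`
with chain vertex `0` (and all incident edges) deleted. -/
def brokenChainsawGraph (n a b : ℕ) :
    SimpleGraph ({x : ZMod (n + 1) × Fin a | ¬(x.1 = 0 ∧ x.2.val = 0)} : Set _) :=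
  (chainsawGraph (n + 1) a b).induce _

/-!
An independent set of `C(n, a, b)` meets each clique `{v} × Fin a` at most once, so it is the
graph of a partial choice function `g : ZMod n → Option (Fin a)`, where `g v = some 0` means
that the chain vertex `v` is chosen. Independence becomes one local condition: after a chosen
chain vertex `v`, clique `v + 1` may only use one of its last `b - 1` blade vertices. Fixing the
set `T` of chosen chain vertices (an independent set of the cycle), the value of `g` can then be
chosen independently at each `v`: one way on `T`, `b` ways on `T + 1`, and `a` ways elsewhere.
-/

open Finset

section OptionGraph

variable {V α : Type*} [Fintype V] [Fintype α] [DecidableEq α]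

def optionGraph (g : V → Option α) : Finset (V × α) :=
  univ.filter fun x => g x.1 = some x.2

@[simp]
lemma mem_optionGraph {g : V → Option α} {x : V × α} :
    x ∈ optionGraph g ↔ g x.1 = some x.2 := by
  simp [optionGraph]

lemma optionGraph_injective : Function.Injective (optionGraph : (V → Option α) → _) := by
  intro g h hgh
  funext v
  cases hg : g v with
  | none =>
    cases hh : h v with
    | none => rfl
    | some j =>
      have : (v, j) ∈ optionGraph g := hgh ▸ mem_optionGraph.2 hh
      simp [hg] at this
  | some i =>
    have : (v, i) ∈ optionGraph h := hgh ▸ mem_optionGraph.2 hg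
    exact (mem_optionGraph.1 this).symm

lemma exists_optionGraph_eq {s : Finset (V × α)}
    (hs : ∀ v i j, (v, i) ∈ s → (v, j) ∈ s → i = j) : ∃ g, optionGraph g = s := by
  classical
  refine ⟨fun v => if h : ∃ i, (v, i) ∈ s then some h.choose else none, ?_⟩
  ext ⟨v, i⟩
  by_cases h : ∃ i, (v, i) ∈ s
  · simp only [mem_optionGraph, dif_pos h, Option.some.injEq]
    exact ⟨fun hi => hi ▸ h.choose_spec, hs v _ _ h.choose_spec⟩
  · simp only [mem_optionGraph, dif_neg h, reduceCtorEq, false_iff]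
    exact fun hi => h ⟨i, hi⟩

lemma card_filter_eq_card_filter_optionGraph [DecidableEq V] (P : Finset (V × α) → Prop)
    [DecidablePred P] (hP : ∀ s, P s → ∀ v i j, (v, i) ∈ s → (v, j) ∈ s → i = j) :
    #(univ.filter P) = #(univ.filter fun g => P (optionGraph g)) := by
  rw [← card_image_of_injective _ optionGraph_injective]
  congr 1
  ext s
  simp only [mem_filter, mem_univ, true_and, mem_image]
  constructor
  · intro h
    obtain ⟨g, rfl⟩ := exists_optionGraph_eq (hP s h)
    exact ⟨g, h, rfl⟩
  · rintro ⟨g, h, rfl⟩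
    exact h

end OptionGraph

lemma prod_ite_mem_ite_mem {V M : Type*} [Fintype V] [DecidableEq V] [CommMonoid M]
    {S S' : Finset V} (h : Disjoint S S') (x y z : M) :
    ∏ v, (if v ∈ S then x else if v ∈ S' then y else z)
      = x ^ #S * y ^ #S' * z ^ (Fintype.card V - #S - #S') := by
  have hS' : univ.filter (· ∉ S) ∩ S' = S' :=
    inter_eq_right.2 fun v hv => by simpa using h.notMem_of_mem_right_finset hv
  have hrest : #((univ.filter (· ∉ S)).filter (· ∉ S')) = Fintype.card V - #S - #S' := by
    rw [filter_filter, Nat.sub_sub, ← card_union_of_disjoint h, ← card_compl]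
    congr 1
    ext v
    simp
  rw [prod_ite, prod_const, prod_ite, prod_const, prod_const, mul_assoc, filter_mem_eq_inter,
    filter_mem_eq_inter, univ_inter, hS', hrest]

lemma Fin.card_filter_lt_val {a : ℕ} (c : ℕ) :
    #{j : Fin a | c < j.val} = a - min a (c + 1) := by
  have hcompl := card_compl (univ.filter fun j : Fin a => j.val < c + 1)
  rw [Fintype.card_fin] at hcompl
  rw [← Fin.card_filter_val_lt, ← hcompl]
  congr 1
  ext j
  simp

lemma numIndepSetsOfSize_cycleGraph_s10 {n : ℕ} [NeZero n] (hn : 2 ≤ n) (t : ℕ) :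
    numIndepSetsOfSize (SimpleGraph.cycleGraph n) t
      = #{T : Finset (ZMod n) | (∀ v ∈ T, v + 1 ∉ T) ∧ #T = t} := by
  obtain ⟨m, rfl⟩ : ∃ m, m + 2 = n := ⟨n - 2, by omega⟩
  set e := ZMod.finEquiv (m + 2)
  have hadj (u v : Fin (m + 2)) :
      (SimpleGraph.cycleGraph (m + 2)).Adj u v ↔ u = v + 1 ∨ v = u + 1 := by
    rw [SimpleGraph.cycleGraph_adj, sub_eq_iff_eq_add', sub_eq_iff_eq_add', add_comm v,
      add_comm u]
  have hsucc (T : Finset (Fin (m + 2))) (u : Fin (m + 2)) :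
      e.toEquiv.toEmbedding u + 1 ∈ T.map e.toEquiv.toEmbedding ↔ u + 1 ∈ T := by
    simp
  unfold numIndepSetsOfSize
  rw [powerset_univ]
  refine card_equiv (Equiv.finsetCongr e.toEquiv) fun T => ?_
  simp only [mem_filter, mem_univ, true_and, hadj, Equiv.finsetCongr_apply, forall_mem_map,
    card_map, hsucc]
  refine and_congr_left fun _ => ⟨?_, ?_⟩
  · exact fun h v hv hv1 => h v hv _ hv1 (.inr rfl)
  · rintro h v hv w hw (rfl | rfl)
    exacts [h w hw hv, h v hv hw]

lemma chainsawGraph_adj_of_ne {n a : ℕ} (b : ℕ) (v : ZMod n) {i j : Fin a} (h : i ≠ j) :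
    (chainsawGraph n a b).Adj (v, i) (v, j) := by
  simp [chainsawGraph, h]

section Chainsaw

variable {n a : ℕ} [NeZero a]

def ChainsawCompatible (b : ℕ) (g : ZMod n → Option (Fin a)) : Prop :=
  ∀ v j, g v = some 0 → g (v + 1) = some j → a - b < j.val

def bladeChoices (b : ℕ) (T : Finset (ZMod n)) (v : ZMod n) : Finset (Option (Fin a)) :=
  {o | (o = some 0 ↔ v ∈ T) ∧ (v - 1 ∈ T → ∀ j, o = some j → a - b < j.val)}

lemma card_bladeChoices {b : ℕ} (hb : 1 ≤ b) (hab : b ≤ a) {T : Finset (ZMod n)}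
    (hT : ∀ v ∈ T, v + 1 ∉ T) (v : ZMod n) :
    #(bladeChoices (a := a) b T v) = if v ∈ T then 1 else if v - 1 ∈ T then b else a := by
  rw [bladeChoices, card_filter, Fintype.sum_option]
  by_cases hv : v ∈ T
  · have : v - 1 ∉ T := fun h => hT _ h (by simpa using hv)
    simp [hv, this]
  by_cases hv' : v - 1 ∈ T
  · have hblades : #{x : Fin a | ¬x = 0 ∧ a - b < x.val} = #{x : Fin a | a - b < x.val} := by
      refine congrArg card (filter_congr fun x _ => and_iff_right_of_imp fun hx h => ?_)
      simp [h] at hx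
    simp [hv, hv', hblades, Fin.card_filter_lt_val]
    omega
  · have := NeZero.pos a
    simp [hv, hv', sum_ite, filter_ne']
    omega

variable [NeZero n]

instance (b : ℕ) : DecidablePred (ChainsawCompatible (n := n) (a := a) b) := by
  unfold ChainsawCompatible
  infer_instance

def chainSet (g : ZMod n → Option (Fin a)) : Finset (ZMod n) :=
  univ.filter fun v => g v = some 0

@[simp]
lemma mem_chainSet {g : ZMod n → Option (Fin a)} {v : ZMod n} :
    v ∈ chainSet g ↔ g v = some 0 := by
  simp [chainSet]

lemma ChainsawCompatible.add_one_notMem_chainSet {b : ℕ} {g : ZMod n → Option (Fin a)}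
    (hg : ChainsawCompatible b g) {v : ZMod n} (hv : v ∈ chainSet g) : v + 1 ∉ chainSet g :=
  fun hv1 => by simpa using hg v 0 (mem_chainSet.1 hv) (mem_chainSet.1 hv1)

lemma indep_optionGraph_chainsawGraph_iff [Fact (1 < n)] (b : ℕ)
    (g : ZMod n → Option (Fin a)) :
    (∀ x ∈ optionGraph g, ∀ y ∈ optionGraph g, ¬ (chainsawGraph n a b).Adj x y)
      ↔ ChainsawCompatible b g := by
  simp only [mem_optionGraph, Prod.forall, chainsawGraph, SimpleGraph.fromRel_adj,
    Fin.val_eq_zero_iff]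
  constructor
  · intro h v j hv hj
    by_contra hle
    exact h v 0 hv (v + 1) j hj ⟨by simp, .inl (.inr ⟨rfl, rfl, by omega⟩)⟩
  · rintro h v i hv w j hw ⟨hne, (rfl | ⟨rfl, rfl, hj⟩) | (rfl | ⟨rfl, rfl, hi⟩)⟩
    · exact hne (by rw [Option.some_injective _ (hv.symm.trans hw)])
    · exact absurd (h v j hv hw) (by omega)
    · exact hne (by rw [Option.some_injective _ (hv.symm.trans hw)])
    · exact absurd (h w i hw hv) (by omega)

lemma card_filter_optionGraph_chain (g : ZMod n → Option (Fin a)) :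
    #((optionGraph g).filter fun x => x.2.val = 0) = #(chainSet g) := by
  refine card_nbij' Prod.fst (fun v => (v, 0)) ?_ ?_ ?_ ?_
  all_goals
    intro x
    simp +contextual [Prod.ext_iff, Fin.val_eq_zero_iff]

open Classical in
lemma card_indep_chainsawGraph_eq [Fact (1 < n)] (b t : ℕ) :
    #(univ.powerset.filter fun s : Finset (ZMod n × Fin a) =>
        (∀ v ∈ s, ∀ w ∈ s, ¬ (chainsawGraph n a b).Adj v w) ∧
        (s.filter fun x => x.2.val = 0).card = t)
      = #(univ.filter fun g : ZMod n → Option (Fin a) =>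
          ChainsawCompatible b g ∧ #(chainSet g) = t) := by
  rw [powerset_univ, card_filter_eq_card_filter_optionGraph]
  · simp only [indep_optionGraph_chainsawGraph_iff, card_filter_optionGraph_chain]
  · intro s hs v i j hi hj
    by_contra hij
    exact hs.1 _ hi _ hj (chainsawGraph_adj_of_ne b v hij)

lemma compatible_and_chainSet_eq_iff (b : ℕ) (T : Finset (ZMod n))
    (g : ZMod n → Option (Fin a)) :
    ChainsawCompatible b g ∧ chainSet g = T ↔ ∀ v, g v ∈ bladeChoices b T v := by
  simp only [bladeChoices, mem_filter, mem_univ, true_and]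
  constructor
  · rintro ⟨hg, rfl⟩ v
    refine ⟨mem_chainSet.symm, fun hv j hj => hg (v - 1) j (mem_chainSet.1 hv) ?_⟩
    simpa using hj
  · intro h
    have hT : chainSet g = T := by
      ext v
      exact mem_chainSet.trans (h v).1
    refine ⟨fun v j hv hj => (h (v + 1)).2 ?_ j hj, hT⟩
    simpa [← hT] using hv

lemma card_compatible_chainSet_eq {b : ℕ} (hb : 1 ≤ b) (hab : b ≤ a) {T : Finset (ZMod n)}
    (hT : ∀ v ∈ T, v + 1 ∉ T) :
    #(univ.filter fun g : ZMod n → Option (Fin a) => ChainsawCompatible b g ∧ chainSet g = T)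
      = b ^ #T * a ^ (n - 2 * #T) := by
  set T' := T.map (Equiv.addRight (1 : ZMod n)).toEmbedding
  have hT' (v : ZMod n) : v ∈ T' ↔ v - 1 ∈ T := by simp [T', mem_map_equiv, sub_eq_add_neg]
  have hdisj : Disjoint T T' :=
    disjoint_left.2 fun v hv hv' => hT _ ((hT' v).1 hv') (by simpa using hv)
  have hfilter : univ.filter (fun g : ZMod n → Option (Fin a) =>
      ChainsawCompatible b g ∧ chainSet g = T) = Fintype.piFinset (bladeChoices b T) := by
    ext g
    simp [compatible_and_chainSet_eq_iff]
  rw [hfilter, Fintype.card_piFinset]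
  simp_rw [card_bladeChoices hb hab hT, ← hT']
  rw [prod_ite_mem_ite_mem hdisj, card_map, one_pow, one_mul, ZMod.card, two_mul, Nat.sub_sub]

lemma card_compatible_chainSet_card_eq (b t : ℕ) (hb : 1 ≤ b) (hab : b ≤ a) :
    #(univ.filter fun g : ZMod n → Option (Fin a) =>
        ChainsawCompatible b g ∧ #(chainSet g) = t)
      = #{T : Finset (ZMod n) | (∀ v ∈ T, v + 1 ∉ T) ∧ #T = t}
          * (b ^ t * a ^ (n - 2 * t)) := by
  rw [card_eq_sum_card_fiberwise (f := chainSet)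
    (t := {T : Finset (ZMod n) | (∀ v ∈ T, v + 1 ∉ T) ∧ #T = t})]
  · rw [← smul_eq_mul, ← sum_const]
    refine sum_congr rfl fun T hT => ?_
    simp only [mem_filter, mem_univ, true_and] at hT
    rw [← hT.2, ← card_compatible_chainSet_eq hb hab hT.1, filter_filter]
    congr 1
    refine filter_congr fun g _ => ⟨fun ⟨⟨hg, _⟩, hgT⟩ => ⟨hg, hgT⟩, fun ⟨hg, hgT⟩ => ?_⟩
    exact ⟨⟨hg, hgT ▸ rfl⟩, hgT⟩
  · intro g hg
    simp only [coe_filter, mem_univ, true_and, Set.mem_ofPred_eq] at hg ⊢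
    exact ⟨fun v => hg.1.add_one_notMem_chainSet, hg.2⟩

end Chainsaw

open Classical in
theorem chainsaw_indepSets_with_chain_count (n a b t : ℕ) [NeZero n] (hn : 3 ≤ n)
    (hb : 1 ≤ b) (hab : b ≤ a) :
    (Finset.univ.powerset.filter fun s : Finset (ZMod n × Fin a) =>
        (∀ v ∈ s, ∀ w ∈ s, ¬ (chainsawGraph n a b).Adj v w) ∧
        (s.filter fun x => x.2.val = 0).card = t).card
      = numIndepSetsOfSize (SimpleGraph.cycleGraph n) t * b ^ t * a ^ (n - 2 * t) := by
  have : NeZero a := ⟨by omega⟩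
  have : Fact (1 < n) := ⟨by omega⟩
  rw [card_indep_chainsawGraph_eq, card_compatible_chainSet_card_eq b t hb hab,
    numIndepSetsOfSize_cycleGraph_s10 (by omega), mul_assoc]
end

section
/- For any n ≥ 1, the identity a^n + ∑_{t=1}^{⌊n/2⌋} (n/(n−t)) · C(n−t, t) = L_n holds when a = 1, i.e., 1 + ∑_{t=1}^{⌊n/2⌋} (n/(n−t)) · C(n−t, t) = L_n, the n-th Lucas number. -/
lemma fib_sum_full (m : ℕ) : Nat.fib (m+1) = ∑ t ∈ Finset.range (m+1), (m - t).choose t := by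
  rw [Nat.fib_succ_eq_sum_choose, Finset.Nat.sum_antidiagonal_eq_sum_range_succ_mk,
    ← Finset.sum_range_reflect]
  refine Finset.sum_congr rfl fun j hj => ?_
  simp only [Finset.mem_range] at hj
  have : m + 1 - 1 - j = m - j := by omega
  rw [this]
  congr 1
  omega

lemma fib_sum_half (m : ℕ) : Nat.fib (m+1) = ∑ t ∈ Finset.range (m/2+1), (m - t).choose t := by
  rw [fib_sum_full]
  symm
  apply Finset.sum_subset
  · intro x hx; simp only [Finset.mem_range] at *; omega
  · intro x hx hx'
    simp only [Finset.mem_range] at *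
    exact Nat.choose_eq_zero_of_lt (by omega)

lemma lucas_fib : ∀ k, lucasNum (k+1) = Nat.fib k + Nat.fib (k+2)
  | 0 => rfl
  | 1 => rfl
  | (k+2) => by
    rw [lucasNum, lucas_fib (k+1), lucas_fib k]
    simp only [show k+1+2 = k+3 from rfl, show k+2+2 = k+4 from rfl]
    have h1 : Nat.fib (k+4) = Nat.fib (k+2) + Nat.fib (k+3) := Nat.fib_add_two
    have h2 : Nat.fib (k+2) = Nat.fib k + Nat.fib (k+1) := Nat.fib_add_two
    omega

lemma term_eq (n t : ℕ) (h1 : 1 ≤ t) (h2 : t ≤ n/2) :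
    n * (n - t).choose t / (n - t) = (n - t).choose t + (n - t - 1).choose (t - 1) := by
  obtain ⟨m, hm'⟩ : ∃ m, n - t = m + 1 := ⟨n - t - 1, by omega⟩
  obtain ⟨s, hs⟩ : ∃ s, t = s + 1 := ⟨t - 1, by omega⟩
  have key : (m+1) * (m).choose s = (m+1).choose (s+1) * (s+1) :=
    Nat.add_one_mul_choose_eq m s
  have hn : n = (m+1) + (s+1) := by omega
  rw [hm', hs, hn]
  simp only [Nat.add_sub_cancel]
  rw [add_mul, mul_comm (s+1) ((m+1).choose (s+1)), ← key, ← mul_add,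
    Nat.mul_div_cancel_left _ (by omega : 0 < m+1)]

theorem one_add_sum_eq_lucas (n : ℕ) (hn : 1 ≤ n) :
    1 + ∑ t ∈ Finset.Icc 1 (n / 2), n * (n - t).choose t / (n - t) = lucasNum n := by
  obtain ⟨k, rfl⟩ : ∃ k, n = k + 1 := ⟨n - 1, by omega⟩
  rw [lucas_fib k]
  rw [Finset.sum_congr rfl fun t ht => term_eq (k+1) t
    (Finset.mem_Icc.mp ht).1 (Finset.mem_Icc.mp ht).2]
  rw [Finset.sum_add_distrib]
  have hins : Finset.range ((k+1)/2 + 1) = insert 0 (Finset.Icc 1 ((k+1)/2)) := by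
    ext x; simp [Finset.mem_Icc, Finset.mem_range]; omega
  have h1 : 1 + ∑ t ∈ Finset.Icc 1 ((k+1)/2), (k + 1 - t).choose t = Nat.fib (k+2) := by
    rw [fib_sum_half (k+1), hins, Finset.sum_insert (by simp)]
    simp
  have h2 : ∑ t ∈ Finset.Icc 1 ((k+1)/2), (k + 1 - t - 1).choose (t - 1) = Nat.fib k := by
    rcases Nat.eq_zero_or_pos k with rfl | hk
    · simp
    obtain ⟨m, rfl⟩ : ∃ m, k = m + 1 := ⟨k - 1, by omega⟩
    rw [fib_sum_half m]
    rw [← Finset.Ico_add_one_right_eq_Icc, Finset.sum_Ico_eq_sum_range]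
    have hr : (m+1+1)/2 + 1 - 1 = m/2 + 1 := by omega
    rw [hr]
    refine Finset.sum_congr rfl fun i hi => ?_
    congr 1 <;> omega
  omega
end
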